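/- Let r_b, r_γ ≥ 1, let d be a positive integer, 0 < ε < 1, and let H be an r_γ-uniform hypergraph with Turán density zero. Then there exist constants K_1 = K_1(r_b,r_γ,d,ε,H) and K_2 = K_2(r_b,r_γ,d,ε,H) such that the following holds. Let (B, γ, F) be any fiber bundle in which every edge of B has size between 1 and r_b, dim_H(B, γ, F) < d, and for all b ∈ V(B), γ(b) is an r_γ-uniform hypergraph with |γ(b)| ≥ ε·C(|F|, r_γ). Let A be the set of edges of B of size 1. If |F| ≥ K_1, then |A| ≤ K_2 and χ(B − A) ≤ K_2, where B − A is the hypergraph B with the edges in A removed. -/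

import Mathlib

open Finset

/-- `A` embeds into `B` (i.e. `B` contains a copy of `A`). -/
def Embeds {α β : Type} [DecidableEq β] (A : Finset (Finset α)) (B : Finset (Finset β)) : Prop :=
  ∃ f : α → β, Function.Injective f ∧ ∀ e ∈ A, e.image f ∈ B

/-- The chromatic number of the hypergraph with edge set `A` is at most `K`. -/
def ChromAtMost {α : Type} (A : Finset (Finset α)) (K : ℕ) : Prop :=
  ∃ f : α → Fin K, ∀ e ∈ A, ∃ x ∈ e, ∃ y ∈ e, f x ≠ f y

/-- The Turán number `ex(N, H)` for `r`-uniform hypergraphs on `N` vertices. -/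
noncomputable def exNum {α : Type} (r : ℕ) (H : Finset (Finset α)) (N : ℕ) : ℕ :=
  sSup {c : ℕ | ∃ G : Finset (Finset (Fin N)),
    (∀ e ∈ G, e.card = r) ∧ ¬ Embeds H G ∧ G.card = c}

/-- The section of a set `X` of base vertices in the fiber bundle with fibers `γ`. -/
def sectionOf {V F : Type} [Fintype F] [DecidableEq F]
    (γ : V → Finset (Finset F)) (X : Finset V) : Finset (Finset F) :=
  Finset.univ.filter (fun e => ∀ x ∈ X, e ∈ γ x)

/-- `dim_H(B, γ, F) ≥ d`. -/
def HasBundleDim {V F α : Type} [DecidableEq V] [Fintype F] [DecidableEq F]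
    (BE : Finset (Finset V)) (γ : V → Finset (Finset F))
    (H : Finset (Finset α)) (d : ℕ) : Prop :=
  ∃ M : Finset (Finset V), M.card = d ∧ (∀ e ∈ M, e ∈ BE) ∧
    (∀ e₁ ∈ M, ∀ e₂ ∈ M, e₁ ≠ e₂ → Disjoint e₁ e₂) ∧
    ∀ sel : Finset V → V, (∀ e ∈ M, sel e ∈ e) →
      Embeds H (sectionOf γ (M.image sel))

/-!
Put `δ = ε/2` and `T = C(|F|, r_γ)`, and run a recursion carrying a family `𝒰` of `r_γ`-sets and a
set `S` of base vertices whose fibers meet `𝒰` in at least `δ (T + |𝒰|)` sets. Take a maximal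
matching `M` of base edges all of whose transversals have a section meeting `𝒰` in at least
`δ^(|M|+1) T` sets; since Turán density zero makes such sections contain `H`, `|M| < d`. Maximality
says that every base edge avoiding `X = ⋃ M` has a vertex `z` whose fiber nearly misses the
section of some transversal `t`; the set of such `t` is the pattern of `z`. Give the vertices of
`X` their own colors and recurse on each pattern class with `𝒰` minus the section of a transversal
in its pattern: this keeps the density invariant and removes at least `δ^d T` sets, so the
recursion stops after `⌈δ^(-d)⌉` levels, each multiplying the bounds by `d r_b + 1 + 2^2^(d r_b)`.
-/

variable {α : Type}

lemma Embeds.mono {β : Type} [DecidableEq β] {A : Finset (Finset α)} {G G' : Finset (Finset β)}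
    (h : Embeds A G) (hGG' : G ⊆ G') : Embeds A G' := by
  obtain ⟨f, hf, hA⟩ := h
  exact ⟨f, hf, fun e he => hGG' (hA e he)⟩

lemma embeds_of_exNum_lt_card {r N : ℕ} {H : Finset (Finset α)} {G : Finset (Finset (Fin N))}
    (hG : ∀ e ∈ G, #e = r) (hlt : exNum r H N < #G) : Embeds H G := by
  by_contra hH
  have hbdd : BddAbove {c : ℕ | ∃ G' : Finset (Finset (Fin N)),
      (∀ e ∈ G', e.card = r) ∧ ¬ Embeds H G' ∧ G'.card = c} :=
    ⟨Fintype.card (Finset (Fin N)), by rintro c ⟨G', -, -, rfl⟩; exact card_le_univ G'⟩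
  exact (le_csSup hbdd ⟨G, hG, hH, rfl⟩).not_gt hlt

lemma eq_and_eq_of_mul_add_eq_mul_add {m c c' r r' : ℕ} (hr : r < m) (hr' : r' < m)
    (h : m * c + r = m * c' + r') : c = c' ∧ r = r' := by
  have hdiv : ∀ c r, r < m → (m * c + r) / m = c := fun c r hr => by
    rw [Nat.mul_add_div (by omega), Nat.div_eq_of_lt hr, add_zero]
  have hc : c = c' := by rw [← hdiv c r hr, h, hdiv c' r' hr']
  subst hc
  exact ⟨rfl, by omega⟩

section Coloring

variable {V : Type} [DecidableEq V]

def singletonVertices (BE : Finset (Finset V)) (S : Finset V) : Finset V :=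
  S.filter fun y => {y} ∈ BE

def IsProperColoringOn (BE : Finset (Finset V)) (S : Finset V) (f : V → ℕ) : Prop :=
  ∀ e ∈ BE, e ⊆ S → 1 < #e → ∃ x ∈ e, ∃ y ∈ e, f x ≠ f y

def FewColorsAndSingletons (BE : Finset (Finset V)) (S : Finset V) (K : ℕ) : Prop :=
  ∃ f : V → ℕ, (∀ z, f z < K) ∧ IsProperColoringOn BE S f ∧ #(singletonVertices BE S) ≤ K

variable {BE : Finset (Finset V)} {S : Finset V} {K L : ℕ}

lemma FewColorsAndSingletons.mono (h : FewColorsAndSingletons BE S K) (hKL : K ≤ L) :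
    FewColorsAndSingletons BE S L := by
  obtain ⟨f, hf, hproper, hcard⟩ := h
  exact ⟨f, fun z => (hf z).trans_le hKL, hproper, hcard.trans hKL⟩

lemma fewColorsAndSingletons_empty (hK : 0 < K) : FewColorsAndSingletons BE ∅ K := by
  refine ⟨fun _ => 0, fun _ => hK, fun e _ he hcard => ?_, by simp [singletonVertices]⟩
  simp [subset_empty.1 he] at hcard

variable {ι : Type} [DecidableEq ι] {X : Finset V} {p : V → ι} {Q : Finset ι} {m : ℕ}

noncomputable def classLabel (X : Finset V) (p : V → ι) (Q : Finset ι) (z : V) : ℕ :=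
  if z ∈ X then X.toList.idxOf z else if p z ∈ Q then #X + 1 + Q.toList.idxOf (p z) else #X

lemma idxOf_toList_lt_card {β : Type} [DecidableEq β] {s : Finset β} {b : β} (hb : b ∈ s) :
    s.toList.idxOf b < #s := by
  simpa using List.idxOf_lt_length_iff.2 (mem_toList.2 hb)

lemma classLabel_lt (z : V) : classLabel X p Q z < #X + 1 + #Q := by
  unfold classLabel
  split_ifs with hzX hzQ
  · have := idxOf_toList_lt_card hzX; omega
  · have := idxOf_toList_lt_card hzQ; omega
  · omega

lemma classLabel_ne_of_mem {x y : V} (hx : x ∈ X) (hyx : y ≠ x) :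
    classLabel X p Q x ≠ classLabel X p Q y := by
  have hxlt := idxOf_toList_lt_card hx
  unfold classLabel
  by_cases hy : y ∈ X
  · simp only [if_pos hx, if_pos hy]
    exact fun h => hyx ((List.idxOf_inj (mem_toList.2 hy)).1 h.symm)
  · simp only [if_pos hx, if_neg hy]
    split_ifs <;> omega

lemma classLabel_ne_of_ne {x y : V} (hx : x ∉ X) (hy : y ∉ X) (hpx : p x ∈ Q) (hpy : p y ≠ p x) :
    classLabel X p Q x ≠ classLabel X p Q y := by
  unfold classLabel
  simp only [if_neg hx, if_neg hy, if_pos hpx]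
  split_ifs with hpy'
  · exact fun h => hpy ((List.idxOf_inj (mem_toList.2 hpy')).1 (by omega))
  · omega

/-- The color of `z` encodes the pair (`classLabel X p Q z`, color of `z` in its class) as
`m * label + color`. All vertices outside `X` and outside the classes share one label, which is
harmless because every edge avoiding `X` meets a class. -/
lemma exists_isProperColoringOn_of_classes (hm : 0 < m)
    (hcover : ∀ e ∈ BE, e ⊆ S → Disjoint e X → ∃ z ∈ e, p z ∈ Q)
    (hclass : ∀ q ∈ Q, ∃ g : V → ℕ, (∀ z, g z < m) ∧
      IsProperColoringOn BE ((S \ X).filter fun z => p z = q) g) :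
    ∃ f : V → ℕ, (∀ z, f z < m * (#X + 1 + #Q)) ∧ IsProperColoringOn BE S f := by
  choose! g hg_lt hg_proper using hclass
  set c := classLabel X p Q
  set r : V → ℕ := fun z => if z ∉ X ∧ p z ∈ Q then g (p z) z else 0 with hr
  have hr_lt : ∀ z, r z < m := fun z => by
    simp only [hr]
    split_ifs with h
    exacts [hg_lt _ h.2 z, hm]
  have hne : ∀ x y, c x ≠ c y ∨ r x ≠ r y → m * c x + r x ≠ m * c y + r y := fun x y hxy heq => by
    have := eq_and_eq_of_mul_add_eq_mul_add (hr_lt x) (hr_lt y) heq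
    tauto
  refine ⟨fun z => m * c z + r z, fun z => ?_, fun e he heS he1 => ?_⟩
  · calc m * c z + r z < m * (c z + 1) := by rw [mul_add_one]; exact Nat.add_lt_add_left (hr_lt z) _
      _ ≤ m * (#X + 1 + #Q) := Nat.mul_le_mul_left _ (classLabel_lt z)
  by_cases heX : ∃ x ∈ e, x ∈ X
  · obtain ⟨x, hxe, hxX⟩ := heX
    obtain ⟨y, hye, hyx⟩ := exists_mem_ne he1 x
    exact ⟨x, hxe, y, hye, hne x y (Or.inl (classLabel_ne_of_mem hxX hyx))⟩
  have hnX : ∀ z ∈ e, z ∉ X := fun z hz hzX => heX ⟨z, hz, hzX⟩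
  obtain ⟨z₀, hz₀e, hz₀Q⟩ := hcover e he heS (disjoint_left.2 hnX)
  by_cases hsame : ∀ z ∈ e, p z = p z₀
  · have hecls : e ⊆ (S \ X).filter fun z => p z = p z₀ := fun z hz =>
      mem_filter.2 ⟨mem_sdiff.2 ⟨heS hz, hnX z hz⟩, hsame z hz⟩
    obtain ⟨x, hxe, y, hye, hxy⟩ := hg_proper _ hz₀Q e he hecls he1
    refine ⟨x, hxe, y, hye, hne x y (Or.inr ?_)⟩
    simpa only [hr, hnX x hxe, hnX y hye, hsame x hxe, hsame y hye, hz₀Q, not_false_eq_true,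
      and_self, if_true] using hxy
  · push Not at hsame
    obtain ⟨z₁, hz₁e, hz₁⟩ := hsame
    exact ⟨z₀, hz₀e, z₁, hz₁e,
      hne _ _ (Or.inl (classLabel_ne_of_ne (hnX z₀ hz₀e) (hnX z₁ hz₁e) hz₀Q hz₁))⟩

lemma card_singletonVertices_le_of_classes
    (hcover : ∀ e ∈ BE, e ⊆ S → Disjoint e X → ∃ z ∈ e, p z ∈ Q)
    (hclass : ∀ q ∈ Q, #(singletonVertices BE ((S \ X).filter fun z => p z = q)) ≤ m) :
    #(singletonVertices BE S) ≤ #X + #Q * m := by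
  have hsub : singletonVertices BE S ⊆
      X ∪ Q.biUnion fun q => singletonVertices BE ((S \ X).filter fun z => p z = q) := by
    intro y hy
    obtain ⟨hyS, hyBE⟩ := mem_filter.1 hy
    by_cases hyX : y ∈ X
    · exact mem_union_left _ hyX
    obtain ⟨z, hz, hzQ⟩ := hcover {y} hyBE (singleton_subset_iff.2 hyS) (by simpa using hyX)
    rw [mem_singleton.1 hz] at hzQ
    exact mem_union_right _ (mem_biUnion.2 ⟨p y, hzQ,
      mem_filter.2 ⟨mem_filter.2 ⟨mem_sdiff.2 ⟨hyS, hyX⟩, rfl⟩, hyBE⟩⟩)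
  exact (card_le_card hsub).trans ((card_union_le _ _).trans
    (Nat.add_le_add_left (card_biUnion_le_card_mul _ _ _ hclass) _))

lemma fewColorsAndSingletons_of_classes (hm : 0 < m)
    (hcover : ∀ e ∈ BE, e ⊆ S → Disjoint e X → ∃ z ∈ e, p z ∈ Q)
    (hclass : ∀ q ∈ Q, FewColorsAndSingletons BE ((S \ X).filter fun z => p z = q) m) :
    FewColorsAndSingletons BE S (m * (#X + 1 + #Q)) := by
  obtain ⟨f, hf, hproper⟩ := exists_isProperColoringOn_of_classes hm hcover fun q hq =>
    let ⟨g, hg, hgproper, _⟩ := hclass q hq; ⟨g, hg, hgproper⟩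
  have hcard := card_singletonVertices_le_of_classes hcover fun q hq =>
    (hclass q hq).choose_spec.2.2
  exact ⟨f, hf, hproper, hcard.trans (by nlinarith)⟩

lemma FewColorsAndSingletons.chromAtMost [Fintype V] (h : FewColorsAndSingletons BE univ K)
    (hne : ∀ e ∈ BE, 1 ≤ #e) :
    #(BE.filter fun e => #e = 1) ≤ K ∧ ChromAtMost (BE \ BE.filter fun e => #e = 1) K := by
  obtain ⟨f, hf, hproper, hcard⟩ := h
  refine ⟨?_, fun z => ⟨f z, hf z⟩, fun e he => ?_⟩
  · have hsub : BE.filter (fun e => #e = 1) ⊆ (singletonVertices BE univ).image ({·}) := by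
      intro e he
      obtain ⟨heBE, he1⟩ := mem_filter.1 he
      obtain ⟨a, rfl⟩ := card_eq_one.1 he1
      exact mem_image_of_mem _ (mem_filter.2 ⟨mem_univ a, heBE⟩)
    exact (card_le_card hsub).trans (card_image_le.trans hcard)
  · obtain ⟨heBE, he1⟩ := mem_sdiff.1 he
    have : 1 < #e := lt_of_le_of_ne (hne e heBE) fun h => he1 (mem_filter.2 ⟨heBE, h.symm⟩)
    obtain ⟨x, hx, y, hy, hxy⟩ := hproper e heBE (subset_univ e) this
    exact ⟨x, hx, y, hy, fun h => hxy (congrArg Fin.val h)⟩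

end Coloring

section Density

variable {ι β : Type} [DecidableEq β] {γ : ι → Finset β} {𝒰 W : Finset β} {δ T : ℝ}
  {S S' : Finset ι}

def DenseFibers (γ : ι → Finset β) (𝒰 : Finset β) (δ T : ℝ) (S : Finset ι) : Prop :=
  ∀ y ∈ S, δ * (T + #𝒰) ≤ #(γ y ∩ 𝒰)

lemma DenseFibers.mono (hS : DenseFibers γ 𝒰 δ T S) (hS' : S' ⊆ S) : DenseFibers γ 𝒰 δ T S' :=
  fun y hy => hS y (hS' hy)

lemma DenseFibers.eq_empty_of_card_lt (hS : DenseFibers γ 𝒰 δ T S) (hδ : 0 ≤ δ)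
    (h : #𝒰 < δ * T) : S = ∅ :=
  eq_empty_of_forall_notMem fun y hy => by
    have hle : (#(γ y ∩ 𝒰) : ℝ) ≤ #𝒰 := by exact_mod_cast card_le_card inter_subset_right
    nlinarith [hS y hy, mul_nonneg hδ (Nat.cast_nonneg (α := ℝ) #𝒰)]

/-- Removing `W` costs `δ * #W ≥ δ * a` on the left but less than `δ * a` on the right. -/
lemma DenseFibers.sdiff {a : ℝ} (hS : DenseFibers γ 𝒰 δ T S) (hδ : 0 ≤ δ) (hW𝒰 : W ⊆ 𝒰)
    (ha : a ≤ #W) (hWS : ∀ y ∈ S, #(W ∩ γ y) < δ * a) : DenseFibers γ (𝒰 \ W) δ T S := by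
  intro y hy
  have hsplit : (#(γ y ∩ 𝒰) : ℝ) ≤ #(γ y ∩ (𝒰 \ W)) + #(W ∩ γ y) := by
    have hsub : γ y ∩ 𝒰 ⊆ γ y ∩ (𝒰 \ W) ∪ W ∩ γ y := fun u hu => by
      by_cases huW : u ∈ W <;> simp_all
    exact_mod_cast (card_le_card hsub).trans (card_union_le _ _)
  have hsdiff : (#(𝒰 \ W) : ℝ) = #𝒰 - #W := by
    rw [card_sdiff_of_subset hW𝒰, Nat.cast_sub (card_le_card hW𝒰)]
  rw [hsdiff]
  nlinarith [mul_le_mul_of_nonneg_left ha hδ, hS y hy, hWS y hy]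

end Density

section Bundle

variable {V F : Type} [Fintype F] [DecidableEq F]

lemma mem_sectionOf {γ : V → Finset (Finset F)} {X : Finset V} {u : Finset F} :
    u ∈ sectionOf γ X ↔ ∀ x ∈ X, u ∈ γ x := by
  simp [sectionOf]

lemma sectionOf_empty (γ : V → Finset (Finset F)) : sectionOf γ ∅ = univ := by
  ext u; simp [mem_sectionOf]

variable [DecidableEq V]

lemma sectionOf_insert (γ : V → Finset (Finset F)) (x : V) (X : Finset V) :
    sectionOf γ (insert x X) = sectionOf γ X ∩ γ x := by
  ext u; simp [mem_sectionOf, and_comm]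

def transversals (M : Finset (Finset V)) : Finset (Finset V) :=
  (M.biUnion id).powerset.filter fun t => ∀ e ∈ M, #(t ∩ e) = 1

lemma mem_transversals {M : Finset (Finset V)} {t : Finset V} :
    t ∈ transversals M ↔ t ⊆ M.biUnion id ∧ ∀ e ∈ M, #(t ∩ e) = 1 := by
  simp [transversals]

lemma transversals_empty : transversals (∅ : Finset (Finset V)) = {∅} := by
  ext t; simp [mem_transversals]

lemma image_mem_transversals {M : Finset (Finset V)} (hM : (M : Set (Finset V)).PairwiseDisjoint id)
    {sel : Finset V → V} (hsel : ∀ e ∈ M, sel e ∈ e) : M.image sel ∈ transversals M := by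
  refine mem_transversals.2 ⟨fun x hx => ?_, fun e he => card_eq_one.2 ⟨sel e, ?_⟩⟩
  · obtain ⟨e, he, rfl⟩ := mem_image.1 hx
    exact mem_biUnion.2 ⟨e, he, hsel e he⟩
  · ext x
    simp only [mem_inter, mem_image, mem_singleton]
    constructor
    · rintro ⟨⟨e', he', rfl⟩, hx⟩
      by_contra hne
      exact disjoint_left.1 (hM he' he fun h => hne (h ▸ rfl)) (hsel e' he') hx
    · rintro rfl
      exact ⟨⟨e, he, rfl⟩, hsel e he⟩

lemma exists_eq_insert_of_mem_transversals_insert {M : Finset (Finset V)} {E t : Finset V}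
    (ht : t ∈ transversals (insert E M)) : ∃ x ∈ E, ∃ t' ∈ transversals M, t = insert x t' := by
  obtain ⟨htX, ht1⟩ := mem_transversals.1 ht
  obtain ⟨x, hx⟩ := card_eq_one.1 (ht1 E (mem_insert_self E M))
  have hxt : x ∈ t ∩ E := hx ▸ mem_singleton_self x
  refine ⟨x, (mem_inter.1 hxt).2, t ∩ M.biUnion id, mem_transversals.2 ⟨inter_subset_right,
    fun e he => ?_⟩, ?_⟩
  · rw [inter_assoc, inter_eq_right.2 (show e ⊆ M.biUnion id from subset_biUnion_of_mem id he)]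
    exact ht1 e (mem_insert_of_mem he)
  · ext u
    simp only [mem_insert, mem_inter]
    refine ⟨fun hu => ?_, ?_⟩
    · obtain ⟨e, he, hue⟩ := mem_biUnion.1 (htX hu)
      rcases mem_insert.1 he with rfl | he
      · exact Or.inl (mem_singleton.1 (hx ▸ mem_inter.2 ⟨hu, hue⟩))
      · exact Or.inr ⟨hu, mem_biUnion.2 ⟨e, he, hue⟩⟩
    · rintro (rfl | ⟨hu, -⟩)
      exacts [(mem_inter.1 hxt).1, hu]

lemma notMem_of_disjoint_biUnion {M : Finset (Finset V)} {E : Finset V} (hE : E.Nonempty)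
    (hEX : Disjoint E (M.biUnion id)) : E ∉ M := fun hEM =>
  hE.ne_empty (disjoint_self.1 (hEX.mono_right (subset_biUnion_of_mem id hEM)))

def IsDenseMatching (BE : Finset (Finset V)) (γ : V → Finset (Finset F)) (𝒰 : Finset (Finset F))
    (δ T : ℝ) (M : Finset (Finset V)) : Prop :=
  M ⊆ BE ∧ (M : Set (Finset V)).PairwiseDisjoint id ∧
    ∀ t ∈ transversals M, δ ^ (#M + 1) * T ≤ #(𝒰 ∩ sectionOf γ t)

variable {BE : Finset (Finset V)} {γ : V → Finset (Finset F)} {H : Finset (Finset α)}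
  {𝒰 𝒰₀ : Finset (Finset F)} {δ T : ℝ} {M : Finset (Finset V)}

lemma isDenseMatching_empty (h : δ * T ≤ #𝒰) : IsDenseMatching BE γ 𝒰 δ T ∅ := by
  refine ⟨empty_subset _, by simp, fun t ht => ?_⟩
  rw [transversals_empty, mem_singleton] at ht
  simpa [ht, sectionOf_empty] using h

lemma IsDenseMatching.insert (hM : IsDenseMatching BE γ 𝒰 δ T M) {E : Finset V} (hE : E ∈ BE)
    (hEne : E.Nonempty) (hEX : Disjoint E (M.biUnion id))
    (hdense : ∀ z ∈ E, ∀ t ∈ transversals M, δ ^ (#M + 2) * T ≤ #(𝒰 ∩ sectionOf γ t ∩ γ z)) :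
    IsDenseMatching BE γ 𝒰 δ T (insert E M) := by
  obtain ⟨hMBE, hMdisj, hMdense⟩ := hM
  refine ⟨insert_subset hE hMBE, ?_, fun t ht => ?_⟩
  · rw [coe_insert]
    exact hMdisj.insert fun e he _ => hEX.mono_right (subset_biUnion_of_mem id he)
  · obtain ⟨x, hxE, t', ht', rfl⟩ := exists_eq_insert_of_mem_transversals_insert ht
    rw [card_insert_of_notMem (notMem_of_disjoint_biUnion hEne hEX), sectionOf_insert,
      ← inter_assoc]
    exact hdense x hxE t' ht'

lemma IsDenseMatching.hasBundleDim {d : ℕ}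
    (hM : IsDenseMatching BE γ 𝒰 δ T M) (hMd : #M = d) (h𝒰 : 𝒰 ⊆ 𝒰₀)
    (hEmb : ∀ G ⊆ 𝒰₀, δ ^ (d + 1) * T ≤ #G → Embeds H G) : HasBundleDim BE γ H d := by
  obtain ⟨hMBE, hMdisj, hMdense⟩ := hM
  refine ⟨M, hMd, hMBE, fun e₁ h₁ e₂ h₂ hne => hMdisj h₁ h₂ hne, fun sel hsel => ?_⟩
  have hbig := hMdense _ (image_mem_transversals hMdisj hsel)
  rw [hMd] at hbig
  exact (hEmb _ (inter_subset_left.trans h𝒰) hbig).mono inter_subset_right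

lemma exists_maximal_isDenseMatching {d : ℕ}
    (h : δ * T ≤ #𝒰) (hdim : ¬ HasBundleDim BE γ H d) (h𝒰 : 𝒰 ⊆ 𝒰₀)
    (hEmb : ∀ G ⊆ 𝒰₀, δ ^ (d + 1) * T ≤ #G → Embeds H G) :
    ∃ M, IsDenseMatching BE γ 𝒰 δ T M ∧ #M < d ∧
      ∀ M', IsDenseMatching BE γ 𝒰 δ T M' → #M' ≠ #M + 1 := by
  classical
  let P : ℕ → Prop := fun j => ∃ M, IsDenseMatching BE γ 𝒰 δ T M ∧ #M = j
  have hPd : ¬ P d := fun ⟨M, hM, hMd⟩ => hdim (hM.hasBundleDim hMd h𝒰 hEmb)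
  obtain ⟨M, hM, hMs⟩ : P (Nat.findGreatest P d) :=
    Nat.findGreatest_spec (Nat.zero_le d) ⟨∅, isDenseMatching_empty h, card_empty⟩
  have hsd : #M < d := lt_of_le_of_ne (hMs ▸ Nat.findGreatest_le d) fun hMd => hPd ⟨M, hM, hMd⟩
  refine ⟨M, hM, hsd, fun M' hM' hM'card => ?_⟩
  exact Nat.findGreatest_is_greatest (P := P) (n := d) (by omega) (by omega) ⟨M', hM', hM'card⟩

noncomputable def pattern (γ : V → Finset (Finset F)) (𝒰 : Finset (Finset F)) (δ T : ℝ)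
    (M : Finset (Finset V)) (z : V) : Finset (Finset V) :=
  (transversals M).filter fun t => #(𝒰 ∩ sectionOf γ t ∩ γ z) < δ ^ (#M + 2) * T

lemma exists_pattern_nonempty (hM : IsDenseMatching BE γ 𝒰 δ T M)
    (hmax : ∀ M', IsDenseMatching BE γ 𝒰 δ T M' → #M' ≠ #M + 1) {E : Finset V} (hE : E ∈ BE)
    (hEne : E.Nonempty) (hEX : Disjoint E (M.biUnion id)) :
    ∃ z ∈ E, (pattern γ 𝒰 δ T M z).Nonempty := by
  by_contra! hempty
  refine hmax _ (hM.insert hE hEne hEX fun z hz t ht => ?_) ?_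
  · by_contra! hlt
    exact notMem_empty t (hempty z hz ▸ (mem_filter.2 ⟨ht, hlt⟩ : t ∈ pattern γ 𝒰 δ T M z))
  · rw [card_insert_of_notMem (notMem_of_disjoint_biUnion hEne hEX)]

/-- Deleting from `𝒰` the section of a transversal in a common pattern of the class keeps the
density invariant on the class and uses up at least `δ ^ d * T` sets of `𝒰`. -/
lemma fewColorsAndSingletons_patternClass {d k K : ℕ} (hδ0 : 0 < δ) (hδ1 : δ ≤ 1) (hT : 0 ≤ T)
    (IH : ∀ 𝒰' ⊆ 𝒰₀, ∀ S : Finset V, DenseFibers γ 𝒰' δ T S →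
      #𝒰' ≤ k * (δ ^ d * T) → FewColorsAndSingletons BE S K)
    (hM : IsDenseMatching BE γ 𝒰 δ T M) (hMd : #M < d) (h𝒰 : 𝒰 ⊆ 𝒰₀) {S : Finset V}
    (hS : DenseFibers γ 𝒰 δ T S) (hsize : #𝒰 ≤ (k + 1) * (δ ^ d * T))
    {q : Finset (Finset V)} (hq : q ⊆ transversals M) (hqne : q.Nonempty) :
    FewColorsAndSingletons BE (S.filter fun z => pattern γ 𝒰 δ T M z = q) K := by
  obtain ⟨t, htq⟩ := hqne
  set W := 𝒰 ∩ sectionOf γ t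
  have hW : δ ^ (#M + 1) * T ≤ #W := hM.2.2 t (hq htq)
  refine IH (𝒰 \ W) (sdiff_subset.trans h𝒰) _
    ((hS.mono (filter_subset _ _)).sdiff hδ0.le inter_subset_left hW fun z hz => ?_) ?_
  · have hsmall := (mem_filter.1 ((mem_filter.1 hz).2 ▸ htq : t ∈ pattern γ 𝒰 δ T M z)).2
    rwa [← mul_assoc, ← pow_succ']
  · have hpow : δ ^ d * T ≤ δ ^ (#M + 1) * T :=
      mul_le_mul_of_nonneg_right (pow_le_pow_of_le_one hδ0.le hδ1 hMd) hT
    rw [card_sdiff_of_subset inter_subset_left, Nat.cast_sub (card_le_card inter_subset_left)]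
    linarith

variable (BE γ H) {rb d : ℕ}
variable (hδ0 : 0 < δ) (hδ1 : δ ≤ 1) (hT : 0 < T) (hne : ∀ e ∈ BE, e.Nonempty)
  (hrb : ∀ e ∈ BE, #e ≤ rb) (hdim : ¬ HasBundleDim BE γ H d)
  (hEmb : ∀ G ⊆ 𝒰₀, δ ^ (d + 1) * T ≤ #G → Embeds H G)
include hδ0 hδ1 hT hne hrb hdim hEmb

lemma fewColorsAndSingletons_succ {k K : ℕ} (hK : 0 < K)
    (IH : ∀ 𝒰 ⊆ 𝒰₀, ∀ S : Finset V, DenseFibers γ 𝒰 δ T S →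
      #𝒰 ≤ k * (δ ^ d * T) → FewColorsAndSingletons BE S K) :
    ∀ 𝒰 ⊆ 𝒰₀, ∀ S : Finset V, DenseFibers γ 𝒰 δ T S →
      #𝒰 ≤ (k + 1) * (δ ^ d * T) →
      FewColorsAndSingletons BE S (K * (d * rb + 1 + 2 ^ 2 ^ (d * rb))) := by
  intro 𝒰 h𝒰 S hS hsize
  rcases lt_or_ge (#𝒰 : ℝ) (δ * T) with hsmall | hlarge
  · rw [hS.eq_empty_of_card_lt hδ0.le hsmall]
    exact fewColorsAndSingletons_empty (by positivity)
  obtain ⟨M, hM, hMd, hmax⟩ := exists_maximal_isDenseMatching hlarge hdim h𝒰 hEmb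
  set X := M.biUnion id
  set Q := (transversals M).powerset.erase ∅
  have hX : #X ≤ d * rb := (card_biUnion_le_card_mul _ _ _ fun e he => hrb e (hM.1 he)).trans
    (Nat.mul_le_mul_right _ hMd.le)
  have hQ : #Q ≤ 2 ^ 2 ^ (d * rb) := calc
    #Q ≤ 2 ^ #(transversals M) := (card_erase_le).trans (card_powerset _).le
    _ ≤ 2 ^ 2 ^ #X := Nat.pow_le_pow_right two_pos
      ((card_filter_le _ _).trans (card_powerset _).le)
    _ ≤ 2 ^ 2 ^ (d * rb) := Nat.pow_le_pow_right two_pos (Nat.pow_le_pow_right two_pos hX)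
  refine (fewColorsAndSingletons_of_classes (X := X) (p := pattern γ 𝒰 δ T M) (Q := Q) hK
    (fun e he _ heX => ?_) (fun q hq => ?_)).mono (Nat.mul_le_mul_left K (by omega))
  · obtain ⟨z, hz, hzp⟩ := exists_pattern_nonempty hM hmax he (hne e he) heX
    exact ⟨z, hz, mem_erase.2 ⟨hzp.ne_empty, mem_powerset.2 (filter_subset _ _)⟩⟩
  · obtain ⟨hqne, hqT⟩ := mem_erase.1 hq
    exact fewColorsAndSingletons_patternClass hδ0 hδ1 hT.le IH hM hMd h𝒰
      (hS.mono sdiff_subset) hsize (mem_powerset.1 hqT) (nonempty_iff_ne_empty.2 hqne)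

theorem fewColorsAndSingletons_of_dense (k : ℕ) :
    ∀ 𝒰 ⊆ 𝒰₀, ∀ S : Finset V, DenseFibers γ 𝒰 δ T S →
      #𝒰 ≤ k * (δ ^ d * T) → FewColorsAndSingletons BE S ((d * rb + 1 + 2 ^ 2 ^ (d * rb)) ^ k) := by
  induction k with
  | zero =>
    intro 𝒰 _ S hS hsize
    rw [hS.eq_empty_of_card_lt hδ0.le (by
      rw [Nat.cast_zero, zero_mul] at hsize; exact hsize.trans_lt (mul_pos hδ0 hT))]
    exact fewColorsAndSingletons_empty (by positivity)
  | succ k IH =>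
    rw [pow_succ]
    exact_mod_cast
      fewColorsAndSingletons_succ BE γ H hδ0 hδ1 hT hne hrb hdim hEmb (by positivity) IH

end Bundle

theorem fiber_bundle_coloring_with_singletons_general
    (rb rγ d : ℕ)
    (ε : ℝ) (hε0 : 0 < ε) (hε1 : ε < 1)
    (mh : ℕ) (H : Finset (Finset (Fin mh)))
    (hπ : Filter.Tendsto (fun N : ℕ => (exNum rγ H N : ℝ) / (N.choose rγ : ℝ))
      Filter.atTop (nhds 0)) :
    ∃ K₁ K₂ : ℕ, ∀ (nb nf : ℕ) (BE : Finset (Finset (Fin nb)))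
      (γ : Fin nb → Finset (Finset (Fin nf))),
      (∀ e ∈ BE, 1 ≤ e.card ∧ e.card ≤ rb) →
      (∀ b : Fin nb, ∀ e ∈ γ b, e.card = rγ) →
      ¬ HasBundleDim BE γ H d →
      (∀ b : Fin nb, ε * (nf.choose rγ : ℝ) ≤ ((γ b).card : ℝ)) →
      K₁ ≤ nf →
      (BE.filter (fun e => e.card = 1)).card ≤ K₂ ∧
      ChromAtMost (BE \ BE.filter (fun e => e.card = 1)) K₂ := by
  have hδ0 : 0 < ε / 2 := half_pos hε0
  obtain ⟨N₀, hN₀⟩ := Filter.eventually_atTop.1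
    (hπ.eventually (gt_mem_nhds (pow_pos hδ0 (d + 1))))
  refine ⟨max N₀ rγ, (d * rb + 1 + 2 ^ 2 ^ (d * rb)) ^ ⌈(2 / ε) ^ d⌉₊, ?_⟩
  intro nb nf BE γ hBE hunif hdim hdense hnf
  set T : ℝ := (nf.choose rγ : ℝ)
  have hT : 0 < T := Nat.cast_pos.2 (Nat.choose_pos (le_of_max_le_right hnf))
  have hEmb : ∀ G ⊆ powersetCard rγ univ, (ε / 2) ^ (d + 1) * T ≤ #G → Embeds H G :=
    fun G hG hGcard => embeds_of_exNum_lt_card (fun e he => (mem_powersetCard.1 (hG he)).2) <| by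
      exact_mod_cast ((div_lt_iff₀ hT).1 (hN₀ nf (le_of_max_le_left hnf))).trans_le hGcard
  have hγ : ∀ y, γ y ∩ powersetCard rγ univ = γ y := fun y =>
    inter_eq_left.2 fun e he => mem_powersetCard.2 ⟨subset_univ e, hunif y e he⟩
  have hcardU : (#(powersetCard rγ (univ : Finset (Fin nf))) : ℝ) = T := by
    rw [card_powersetCard, card_univ, Fintype.card_fin]
  refine FewColorsAndSingletons.chromAtMost (fewColorsAndSingletons_of_dense BE γ H hδ0
    (by linarith) hT (fun e he => card_pos.1 (hBE e he).1) (fun e he => (hBE e he).2) hdim hEmb _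
    _ subset_rfl univ (fun y _ => ?_) ?_) fun e he => (hBE e he).1
  · rw [hγ, hcardU]
    linarith [hdense y]
  · have hceil : 1 ≤ (⌈(2 / ε) ^ d⌉₊ : ℝ) * (ε / 2) ^ d := calc
      (1 : ℝ) = (2 / ε) ^ d * (ε / 2) ^ d := by
        rw [← mul_pow, div_mul_div_cancel₀ hε0.ne', div_self two_ne_zero, one_pow]
      _ ≤ _ := mul_le_mul_of_nonneg_right (Nat.le_ceil _) (pow_nonneg hδ0.le d)
    rw [hcardU]
    nlinarith

/-- Theorem: coloring non-uniform fiber bundles. Let `H` be an `r_γ`-uniform hypergraph with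
Turán density zero. There are constants `K₁, K₂` such that for every fiber bundle whose base
edges have size between `1` and `r_b`, with `dim_H < d` and all fibers `r_γ`-uniform of size
at least `ε·C(|F|, r_γ)`: if `|F| ≥ K₁`, then the set `A` of base edges of size `1` has at
most `K₂` elements, and `χ(B − A) ≤ K₂`. -/
theorem fiber_bundle_coloring_with_singletons
    (rb rγ d : ℕ) (hrb : 1 ≤ rb) (hrγ : 1 ≤ rγ) (hd : 0 < d)
    (ε : ℝ) (hε0 : 0 < ε) (hε1 : ε < 1)
    (mh : ℕ) (H : Finset (Finset (Fin mh))) (hH : ∀ e ∈ H, e.card = rγ)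
    (hπ : Filter.Tendsto (fun N : ℕ => (exNum rγ H N : ℝ) / (N.choose rγ : ℝ))
      Filter.atTop (nhds 0)) :
    ∃ K₁ K₂ : ℕ, ∀ (nb nf : ℕ) (BE : Finset (Finset (Fin nb)))
      (γ : Fin nb → Finset (Finset (Fin nf))),
      (∀ e ∈ BE, 1 ≤ e.card ∧ e.card ≤ rb) →
      (∀ b : Fin nb, ∀ e ∈ γ b, e.card = rγ) →
      ¬ HasBundleDim BE γ H d →
      (∀ b : Fin nb, ε * (nf.choose rγ : ℝ) ≤ ((γ b).card : ℝ)) →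
      K₁ ≤ nf →
      (BE.filter (fun e => e.card = 1)).card ≤ K₂ ∧
      ChromAtMost (BE \ BE.filter (fun e => e.card = 1)) K₂ :=
  fiber_bundle_coloring_with_singletons_general rb rγ d ε hε0 hε1 mh H hπ
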